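/- arXiv:2010.08664 — 2 statements merged into one kernel-verified Lean document; each statement's English description precedes it below -/
import Mathlib

section
/- An oriented digraph G = (V,E) is an oriented proper circular-arc catch digraph if and only if there exists a circular ordering σ of V such that for all vertices u <_σ v <_σ w <_σ x (in the circular order), if uw ∈ E then either (uv ∈ E and vw ∈ E) or (ux ∈ E and xw ∈ E). -/
/-- Membership in the closed clockwise circular arc starting at `a` of length `ℓ`
on a circle of circumference 1 (points are reals modulo 1). -/
def arcMem (a ℓ x : ℝ) : Prop := Int.fract (x - a) ≤ ℓ

/-- The set of points of the circle (reals, modulo 1) lying on the arc. -/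
def arcSet (a ℓ : ℝ) : Set ℝ := {x | arcMem a ℓ x}

/-- `E` is a circular-arc catch digraph: each vertex `v` carries a circular arc
(start `a v`, length `ℓ v`) and a point `p v` inside its own arc, and
`E u v` iff `u ≠ v` and the point of `v` lies in the arc of `u`. -/
def IsCACatchDigraph {V : Type*} (E : V → V → Prop) : Prop :=
  ∃ a ℓ p : V → ℝ, (∀ v, arcMem (a v) (ℓ v) (p v)) ∧
    ∀ u v, E u v ↔ u ≠ v ∧ arcMem (a u) (ℓ u) (p v)

/-- Proper circular-arc catch digraph: as above, with no arc properly contained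
in another. -/
def IsProperCACatchDigraph {V : Type*} (E : V → V → Prop) : Prop :=
  ∃ a ℓ p : V → ℝ, (∀ v, arcMem (a v) (ℓ v) (p v)) ∧
    (∀ u v : V, ¬ arcSet (a u) (ℓ u) ⊂ arcSet (a v) (ℓ v)) ∧
    ∀ u v, E u v ↔ u ≠ v ∧ arcMem (a u) (ℓ u) (p v)

/-- A digraph is oriented: no pair of vertices has edges in both directions. -/
def Oriented {V : Type*} (E : V → V → Prop) : Prop := ∀ u v, E u v → ¬ E v u

/-- A subset of `Fin n` is a circular (cyclically consecutive) block. -/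
def CircBlock {n : ℕ} (S : Set (Fin n)) : Prop :=
  S = ∅ ∨ ∃ a b : Fin n, S = {i | i - a ≤ b - a}


/-- Four elements of `Fin n` occur in this cyclic order. -/
def Cyc4 {n : ℕ} (i j k l : Fin n) : Prop :=
  (i < j ∧ j < k ∧ k < l) ∨ (j < k ∧ k < l ∧ l < i) ∨
  (k < l ∧ l < i ∧ i < j) ∨ (l < i ∧ i < j ∧ j < k)

/-!
Sorting the vertices by the positions of their points on the circle gives the ordering. If the
arc of `u` catches `w`, it contains one of the two circular segments between `p u` and `p w`, and
a vertex whose point lies inside that segment is caught by `u`; if it did not catch `w`, its arc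
would avoid `p u` and `p w` and so lie properly inside the arc of `u`.

Conversely, the four-point condition makes every closed out-neighbourhood a cyclic interval of
the ordering, and forces an interval nested in another one to share an endpoint with it (a vertex
adjacent to all others has a single gap, which every other interval meets). Putting vertex `j`
at `j / n` and widening each interval `[s, s + r]` on both sides by a slack that decreases with
`r` turns this into a proper arc model: of two nested intervals, the shorter one overhangs at
the shared endpoint.
-/

def cycDist {n : ℕ} (i j : Fin n) : ℕ := (j - i).val

def cycIcc {n : ℕ} (s : Fin n) (r : ℕ) : Set (Fin n) := {j | cycDist s j ≤ r}

section CycDist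

variable {n : ℕ}

theorem cycDist_lt (i j : Fin n) : cycDist i j < n := (j - i).isLt

theorem cycDist_eq (i j : Fin n) :
    cycDist i j = if i.val ≤ j.val then j.val - i.val else n + j.val - i.val := by
  split_ifs with h
  · exact Fin.coe_sub_iff_le.mpr h
  · exact Fin.coe_sub_iff_lt.mpr (not_le.mp h)

@[simp]
theorem cycDist_self (i : Fin n) : cycDist i i = 0 := by simp [cycDist_eq]

theorem cycDist_eq_zero {i j : Fin n} : cycDist i j = 0 ↔ i = j := by
  have := j.isLt
  rw [cycDist_eq, Fin.ext_iff]
  split_ifs <;> omega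

theorem cycDist_add_cycDist (i j k : Fin n) :
    cycDist i j + cycDist j k = cycDist i k ∨ cycDist i j + cycDist j k = cycDist i k + n := by
  have := i.isLt; have := j.isLt; have := k.isLt
  rw [cycDist_eq, cycDist_eq, cycDist_eq]
  split_ifs <;> omega

theorem cycDist_inj {i j k : Fin n} : cycDist i j = cycDist i k ↔ j = k := by
  have := i.isLt; have := j.isLt; have := k.isLt
  rw [cycDist_eq, cycDist_eq, Fin.ext_iff]
  split_ifs <;> omega

theorem exists_cycDist_eq (i : Fin n) {t : ℕ} (ht : t < n) : ∃ j, cycDist i j = t := by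
  have := i.isLt
  by_cases h : i.val + t < n
  · refine ⟨⟨i.val + t, h⟩, ?_⟩
    rw [cycDist_eq]; dsimp only; split_ifs <;> omega
  · refine ⟨⟨i.val + t - n, by omega⟩, ?_⟩
    rw [cycDist_eq]; dsimp only; split_ifs <;> omega

theorem cycDist_add_one_self [NeZero n] (a : Fin n) : cycDist (a + 1) a + 1 = n := by
  obtain ⟨k, rfl⟩ := Nat.exists_eq_succ_of_ne_zero (NeZero.ne n)
  simp [cycDist, Fin.coe_neg_one]

theorem cycDist_self_add_one [NeZero n] (a : Fin n) (hn : 1 < n) : cycDist a (a + 1) = 1 := by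
  simp [cycDist, Nat.mod_eq_of_lt hn]

theorem cyc4_iff {i j k l : Fin n} :
    Cyc4 i j k l ↔ 0 < cycDist i j ∧ cycDist i j < cycDist i k ∧ cycDist i k < cycDist i l := by
  have := i.isLt; have := j.isLt; have := k.isLt; have := l.isLt
  simp only [Cyc4, Fin.lt_def]
  rw [cycDist_eq, cycDist_eq, cycDist_eq]
  split_ifs <;> omega

theorem Cyc4.rotate {i j k l : Fin n} (h : Cyc4 i j k l) : Cyc4 l i j k := by
  unfold Cyc4 at *
  tauto

theorem cyc4_of_cycDist_lt {o i j k l : Fin n} (hij : cycDist o i < cycDist o j)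
    (hjk : cycDist o j < cycDist o k) (hkl : cycDist o k < cycDist o l) : Cyc4 i j k l := by
  have := cycDist_add_cycDist o i j; have := cycDist_add_cycDist o i k
  have := cycDist_add_cycDist o i l
  have := cycDist_lt o l; have := cycDist_lt i j; have := cycDist_lt i k; have := cycDist_lt i l
  exact cyc4_iff.mpr (by omega)

end CycDist

noncomputable def cwDist (x y : ℝ) : ℝ := Int.fract (y - x)

def cwSeg (x y : ℝ) : Set ℝ := {z | cwDist x z ≤ cwDist x y}

theorem cwDist_nonneg (x y : ℝ) : 0 ≤ cwDist x y := Int.fract_nonneg _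

theorem cwDist_lt_one (x y : ℝ) : cwDist x y < 1 := Int.fract_lt_one _

@[simp]
theorem cwDist_self (x : ℝ) : cwDist x x = 0 := by simp [cwDist]

theorem cwDist_add_cwDist (x y z : ℝ) :
    cwDist x y + cwDist y z = cwDist x z ∨ cwDist x y + cwDist y z = cwDist x z + 1 := by
  obtain ⟨k, hk⟩ := Int.fract_add (y - x) (z - y)
  rw [show y - x + (z - y) = z - x by ring] at hk
  change cwDist x z - cwDist x y - cwDist y z = k at hk
  have := cwDist_nonneg x z; have := cwDist_nonneg x y; have := cwDist_nonneg y z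
  have := cwDist_lt_one x z; have := cwDist_lt_one x y; have := cwDist_lt_one y z
  have hk1 : k < 1 := by exact_mod_cast (show (k : ℝ) < 1 by linarith)
  have hk2 : -2 < k := by exact_mod_cast (show (-2 : ℝ) < k by linarith)
  obtain rfl | rfl : k = 0 ∨ k = -1 := by omega
  · left; push_cast at hk; linarith
  · right; push_cast at hk; linarith

theorem cwDist_fract_fract (x y : ℝ) : cwDist (Int.fract x) (Int.fract y) = cwDist x y := by
  unfold cwDist
  rw [Int.fract_eq_fract]
  exact ⟨⌊x⌋ - ⌊y⌋, by unfold Int.fract; push_cast; ring⟩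

theorem arcMem_iff_cwDist_le {a ℓ x : ℝ} : arcMem a ℓ x ↔ cwDist a x ≤ ℓ := Iff.rfl

theorem cwSeg_subset_arcSet_of_cwDist_le {a ℓ x y : ℝ} (hy : arcMem a ℓ y)
    (hxy : cwDist a x ≤ cwDist a y) : cwSeg x y ⊆ arcSet a ℓ := by
  intro z hz
  change cwDist x z ≤ cwDist x y at hz
  change cwDist a z ≤ ℓ
  have := cwDist_lt_one x y; have := cwDist_nonneg a x; have := cwDist_lt_one a y
  rcases cwDist_add_cwDist a x y with h | h <;> rcases cwDist_add_cwDist a x z with h' | h' <;>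
    linarith [arcMem_iff_cwDist_le.mp hy]

theorem cwSeg_subset_or {a ℓ x y : ℝ} (hx : arcMem a ℓ x) (hy : arcMem a ℓ y) :
    cwSeg x y ⊆ arcSet a ℓ ∨ cwSeg y x ⊆ arcSet a ℓ := by
  rcases le_total (cwDist a x) (cwDist a y) with h | h
  · exact Or.inl (cwSeg_subset_arcSet_of_cwDist_le hy h)
  · exact Or.inr (cwSeg_subset_arcSet_of_cwDist_le hx h)

theorem arcSet_ssubset_of_cwSeg_subset {a ℓ b m s t z₀ : ℝ} (hst : cwSeg s t ⊆ arcSet a ℓ)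
    (hz₀ : arcMem b m z₀) (h0 : 0 < cwDist s z₀) (h1 : cwDist s z₀ < cwDist s t)
    (hs : ¬ arcMem b m s) (ht : ¬ arcMem b m t) : arcSet b m ⊂ arcSet a ℓ := by
  refine ⟨fun z hz => ?_, fun h => hs (h (hst (by simp [cwSeg, cwDist_nonneg])))⟩
  by_cases hzs : cwDist s z ≤ cwDist s t
  · exact hst hzs
  exfalso
  have := cwDist_lt_one s z; have := cwDist_lt_one z₀ t; have := cwDist_nonneg z z₀
  have := cwDist_lt_one z s
  rcases cwSeg_subset_or hz₀ hz with hseg | hseg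
  · refine ht (hseg ?_)
    change cwDist z₀ t ≤ cwDist z₀ z
    rcases cwDist_add_cwDist s z₀ t with h | h <;> rcases cwDist_add_cwDist s z₀ z with h' | h' <;>
      linarith
  · refine hs (hseg ?_)
    change cwDist z s ≤ cwDist z z₀
    rcases cwDist_add_cwDist s z s with h | h <;> rcases cwDist_add_cwDist z s z₀ with h' | h' <;>
      simp only [cwDist_self] at h h' <;> linarith


def CyclicFourPoint {n : ℕ} (F : Fin n → Fin n → Prop) : Prop :=
  ∀ i j k l, Cyc4 i j k l → F i k → (F i j ∧ F j k) ∨ (F i l ∧ F l k)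

section CatchModel

variable {V : Type*} {E : V → V → Prop} {a ℓ p : V → ℝ}
  (hown : ∀ v, arcMem (a v) (ℓ v) (p v))
  (hproper : ∀ u v, ¬ arcSet (a u) (ℓ u) ⊂ arcSet (a v) (ℓ v))
  (hE : ∀ u v, E u v ↔ u ≠ v ∧ arcMem (a u) (ℓ u) (p v))
  (horient : Oriented E)
include hown hproper hE horient

theorem edges_of_mem_cwSeg {u w y : V} {s t : ℝ} (hst : s = p u ∧ t = p w ∨ s = p w ∧ t = p u)
    (hseg : cwSeg s t ⊆ arcSet (a u) (ℓ u)) (h0 : 0 < cwDist s (p y))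
    (h1 : cwDist s (p y) < cwDist s t) : E u y ∧ E y w := by
  have hys : p y ≠ s := fun h => by simp [h] at h0
  have hyt : p y ≠ t := fun h => by rw [h] at h1; exact lt_irrefl _ h1
  have hyu : y ≠ u := by rintro rfl; rcases hst with ⟨h, -⟩ | ⟨-, h⟩ <;> simp_all
  have hyw : y ≠ w := by rintro rfl; rcases hst with ⟨-, h⟩ | ⟨h, -⟩ <;> simp_all
  have huy : E u y := (hE u y).2 ⟨hyu.symm, hseg h1.le⟩
  refine ⟨huy, by_contra fun hyw' => hproper y u ?_⟩
  have hw : ¬ arcMem (a y) (ℓ y) (p w) := fun h => hyw' ((hE y w).2 ⟨hyw, h⟩)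
  have hu : ¬ arcMem (a y) (ℓ y) (p u) := fun h => horient u y huy ((hE y u).2 ⟨hyu, h⟩)
  rcases hst with ⟨rfl, rfl⟩ | ⟨rfl, rfl⟩
  · exact arcSet_ssubset_of_cwSeg_subset hseg (hown y) h0 h1 hu hw
  · exact arcSet_ssubset_of_cwSeg_subset hseg (hown y) h0 h1 hw hu

theorem fourPoint_of_cwDist_lt {u v w x : V} (h1 : 0 < cwDist (p u) (p v))
    (h2 : cwDist (p u) (p v) < cwDist (p u) (p w)) (h3 : cwDist (p u) (p w) < cwDist (p u) (p x))
    (huw : E u w) : (E u v ∧ E v w) ∨ (E u x ∧ E x w) := by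
  rcases cwSeg_subset_or (hown u) ((hE u w).1 huw).2 with hseg | hseg
  · exact Or.inl (edges_of_mem_cwSeg hown hproper hE horient (Or.inl ⟨rfl, rfl⟩) hseg h1 h2)
  · refine Or.inr (edges_of_mem_cwSeg hown hproper hE horient (Or.inr ⟨rfl, rfl⟩) hseg ?_ ?_) <;>
    · have := cwDist_lt_one (p u) (p x); have := cwDist_lt_one (p w) (p x)
      have := cwDist_lt_one (p w) (p u); have := cwDist_nonneg (p w) (p u)
      rcases cwDist_add_cwDist (p u) (p w) (p x) with h | h <;>
        rcases cwDist_add_cwDist (p u) (p w) (p u) with h' | h' <;>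
        simp only [cwDist_self] at h' <;> linarith

end CatchModel

theorem exists_equiv_fin_strictMono {V : Type*} [Fintype V] (q : V → ℝ)
    (hq : Function.Injective q) : ∃ σ : Fin (Fintype.card V) ≃ V, StrictMono (q ∘ σ) := by
  let _ : LinearOrder V := LinearOrder.lift' q hq
  let σ := Fintype.orderIsoFinOfCardEq V rfl
  exact ⟨σ.toEquiv, fun i j h => σ.strictMono h⟩

theorem cwDist_of_le {x y : ℝ} (hx : 0 ≤ x) (hy : y < 1) (h : x ≤ y) : cwDist x y = y - x :=
  Int.fract_eq_self.2 ⟨by linarith, by linarith⟩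

theorem cwDist_of_lt {x y : ℝ} (hy : 0 ≤ y) (hx : x < 1) (h : y < x) : cwDist x y = y - x + 1 :=
  Int.fract_eq_iff.2 ⟨by linarith, by linarith, -1, by push_cast; ring⟩

theorem cwDist_lt_cwDist_of_cycDist_lt {n : ℕ} {f : Fin n → ℝ} (hf : StrictMono f)
    (h0 : ∀ i, 0 ≤ f i) (h1 : ∀ i, f i < 1) {i j k : Fin n} (h : cycDist i j < cycDist i k) :
    cwDist (f i) (f j) < cwDist (f i) (f k) := by
  have := k.isLt
  rw [cycDist_eq, cycDist_eq] at h
  have hf' {x y : Fin n} (hxy : x.val < y.val) : f x < f y := hf (Fin.lt_def.2 hxy)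
  have hle {x y : Fin n} (hxy : x.val ≤ y.val) : f x ≤ f y := hf.monotone (Fin.le_def.2 hxy)
  split_ifs at h with hj hk hk
  · rw [cwDist_of_le (h0 _) (h1 _) (hle hj), cwDist_of_le (h0 _) (h1 _) (hle hk)]
    linarith [hf' (show j.val < k.val by omega)]
  · rw [cwDist_of_le (h0 _) (h1 _) (hle hj), cwDist_of_lt (h0 _) (h1 _) (hf' (by omega))]
    linarith [h1 j, h0 k]
  · omega
  · rw [cwDist_of_lt (h0 _) (h1 _) (hf' (by omega)), cwDist_of_lt (h0 _) (h1 _) (hf' (by omega))]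
    linarith [hf' (show j.val < k.val by omega)]

theorem exists_cyclicFourPoint_of_isProperCACatchDigraph {V : Type*} [Fintype V]
    {E : V → V → Prop} (horient : Oriented E) (h : IsProperCACatchDigraph E) :
    ∃ σ : Fin (Fintype.card V) ≃ V, CyclicFourPoint fun i j => E (σ i) (σ j) := by
  obtain ⟨a, ℓ, p, hown, hproper, hE⟩ := h
  have hinj : Function.Injective fun v => Int.fract (p v) := by
    intro x y hxy
    have hxy : Int.fract (p x) = Int.fract (p y) := hxy
    have hmem (c m : ℝ) : arcMem c m (p x) ↔ arcMem c m (p y) := by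
      rw [arcMem_iff_cwDist_le, arcMem_iff_cwDist_le, ← cwDist_fract_fract c (p x),
        ← cwDist_fract_fract c (p y), hxy]
    by_contra hne
    exact horient x y ((hE x y).2 ⟨hne, (hmem _ _).1 (hown x)⟩)
      ((hE y x).2 ⟨Ne.symm hne, (hmem _ _).2 (hown y)⟩)
  obtain ⟨σ, hσ⟩ := exists_equiv_fin_strictMono _ hinj
  refine ⟨σ, fun i j k l hijkl hik => ?_⟩
  have key {j k : Fin _} (h : cycDist i j < cycDist i k) :
      cwDist (p (σ i)) (p (σ j)) < cwDist (p (σ i)) (p (σ k)) := by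
    simpa only [Function.comp, cwDist_fract_fract] using
      cwDist_lt_cwDist_of_cycDist_lt hσ (fun _ => Int.fract_nonneg _)
        (fun _ => Int.fract_lt_one _) h
  obtain ⟨h1, h2, h3⟩ := cyc4_iff.1 hijkl
  exact fourPoint_of_cwDist_lt hown hproper hE horient
    (by simpa using key (j := i) (by simpa using h1)) (key h2) (key h3) hik

/-- In the last alternative `cycIcc (s u) (r u)` contains `c` and its successor `s w`, i.e. it
straddles the seam of `cycIcc (s w) (r w)`. -/
def NestedOnlyAtEnds {n : ℕ} (s : Fin n → Fin n) (r : Fin n → ℕ) : Prop :=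
  ∀ u w, u ≠ w → cycIcc (s u) (r u) ⊆ cycIcc (s w) (r w) →
    r u < r w ∧ (s u = s w ∨ cycDist (s w) (s u) + r u = r w ∨
      ∃ c, cycDist (s u) c + 1 ≤ r u ∧ cycDist (s w) c + 1 = n)

theorem cycDist_add_le_of_cycIcc_subset {n : ℕ} {s s' : Fin n} {r r' : ℕ} (hr' : r' + 1 < n)
    (h : cycIcc s r ⊆ cycIcc s' r') : cycDist s' s + r ≤ r' := by
  by_contra hlt
  have hs : cycDist s' s ≤ r' := h (show cycDist s s ≤ r by simp)
  obtain ⟨j, hj⟩ := exists_cycDist_eq s (t := r' + 1 - cycDist s' s) (by omega)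
  have hj' : cycDist s' j ≤ r' := h (show cycDist s j ≤ r by omega)
  have := cycDist_add_cycDist s' s j
  omega

theorem shareEnd_or_gap_of_full {n : ℕ} {s c su : Fin n} {ru : ℕ} (hc : cycDist s c + 1 = n)
    (hru : ru + 2 ≤ n) (hmem : cycDist su c ≤ ru ∨ cycDist su s ≤ ru) :
    su = s ∨ cycDist s su + ru = n - 1 ∨ ∃ c', cycDist su c' + 1 ≤ ru ∧ cycDist s c' + 1 = n := by
  have := cycDist_add_cycDist s su c; have := cycDist_add_cycDist su s c
  have := cycDist_lt s su; have := cycDist_lt su c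
  rcases hmem with h | h
  · by_cases hend : cycDist su c = ru
    · exact Or.inr (Or.inl (by omega))
    · exact Or.inr (Or.inr ⟨c, by omega, hc⟩)
  · by_cases h0 : cycDist su s = 0
    · exact Or.inl (cycDist_eq_zero.1 h0)
    · exact Or.inr (Or.inr ⟨c, by omega, hc⟩)

namespace CyclicFourPoint

open Relation

variable {n : ℕ} {F : Fin n → Fin n → Prop} (hc : CyclicFourPoint F)
include hc

theorem reflGen_of_between {i o j k : Fin n} (ho : ¬ ReflGen F i o) (hj : ReflGen F i j)
    (hk : cycDist o j ≤ cycDist o k ∧ cycDist o k ≤ cycDist o i ∨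
      cycDist o i ≤ cycDist o k ∧ cycDist o k ≤ cycDist o j) : ReflGen F i k := by
  by_cases hki : k = i
  · exact hki ▸ .refl
  by_cases hkj : k = j
  · exact hkj ▸ hj
  have hji : j ≠ i := by
    rintro rfl
    exact hki (cycDist_inj (i := o).1 (by omega))
  have hFij : F i j := ((reflGen_iff F i j).1 hj).resolve_left hji
  have hoj : 0 < cycDist o j :=
    Nat.pos_of_ne_zero fun h => ho (cycDist_eq_zero.1 h ▸ hj)
  have hoi : 0 < cycDist o i :=
    Nat.pos_of_ne_zero fun h => ho (cycDist_eq_zero.1 h ▸ .refl)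
  have hki' : cycDist o k ≠ cycDist o i := fun h => hki (cycDist_inj.1 h)
  have hkj' : cycDist o k ≠ cycDist o j := fun h => hkj (cycDist_inj.1 h)
  refine .single ?_
  rcases hk with hk | hk
  · have hcyc : Cyc4 o j k i :=
      cyc4_of_cycDist_lt (o := o) (by simpa using hoj) (by omega) (by omega)
    rcases hc i o j k hcyc.rotate hFij with ⟨h, -⟩ | ⟨h, -⟩
    · exact absurd (.single h) ho
    · exact h
  · have hcyc : Cyc4 o i k j :=
      cyc4_of_cycDist_lt (o := o) (by simpa using hoi) (by omega) (by omega)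
    rcases hc i k j o hcyc.rotate.rotate.rotate hFij with ⟨h, -⟩ | ⟨h, -⟩
    · exact h
    · exact absurd (.single h) ho

theorem exists_cycIcc {i o : Fin n} (ho : ¬ ReflGen F i o) :
    ∃ s r, r + 2 ≤ n ∧ {j | ReflGen F i j} = cycIcc s r := by
  classical
  let S := Finset.univ.filter (ReflGen F i)
  have hS : S.Nonempty := ⟨i, by simp [S, ReflGen.refl]⟩
  obtain ⟨jmin, hjmin, hmin⟩ := S.exists_min_image (cycDist o) hS
  obtain ⟨jmax, hjmax, hmax⟩ := S.exists_max_image (cycDist o) hS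
  simp only [S, Finset.mem_filter, Finset.mem_univ, true_and] at hjmin hjmax hmin hmax
  have hpos : 0 < cycDist o jmin :=
    Nat.pos_of_ne_zero fun h => ho (cycDist_eq_zero.1 h ▸ hjmin)
  have := hmin jmax hjmax
  refine ⟨jmin, cycDist o jmax - cycDist o jmin, by have := cycDist_lt o jmax; omega, ?_⟩
  ext j
  have := cycDist_add_cycDist o jmin j
  have := cycDist_lt jmin j; have := cycDist_lt o jmax
  constructor
  · intro hj
    have := hmin j hj; have := hmax j hj
    change cycDist jmin j ≤ _
    omega
  · intro (hj : cycDist jmin j ≤ _)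
    have := hmin i .refl; have := hmax i .refl
    rcases le_total (cycDist o j) (cycDist o i) with h | h
    · exact hc.reflGen_of_between ho hjmin (Or.inl ⟨by omega, h⟩)
    · exact hc.reflGen_of_between ho hjmax (Or.inr ⟨h, by omega⟩)

theorem exists_gap {v : Fin n} (hv : ∀ j, ReflGen F v j) :
    ∃ c t : Fin n, cycDist t c + 1 = n ∧ ∀ u ≠ v, ReflGen F u c ∨ ReflGen F u t := by
  classical
  have : NeZero n := NeZero.of_pos v.pos
  -- `a` is the last vertex after `v` caught by all vertices between `v` and it; since `a + 1` is
  -- not, the four-point condition at `v` makes every vertex after `a + 1` catch `a + 1`.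
  let D := Finset.univ.filter fun k => ∀ j, 0 < cycDist v j → cycDist v j < cycDist v k → F j k
  obtain ⟨a, haD, hmax⟩ := D.exists_max_image (cycDist v) ⟨v, by simp [D]⟩
  simp only [D, Finset.mem_filter, Finset.mem_univ, true_and] at haD hmax
  refine ⟨a, a + 1, cycDist_add_one_self a, fun u hu => ?_⟩
  have hu0 : 0 < cycDist v u := Nat.pos_of_ne_zero fun h => hu (cycDist_eq_zero.1 h).symm
  rcases lt_trichotomy (cycDist v u) (cycDist v a) with h | h | h
  · exact Or.inl (.single (haD u hu0 h))
  · exact Or.inl (cycDist_inj.1 h ▸ .refl)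
  right
  by_cases hua : u = a + 1
  · exact hua ▸ .refl
  have hn : 1 < n := by have := cycDist_lt v u; omega
  have hsucc : cycDist v (a + 1) = cycDist v a + 1 := by
    have := cycDist_add_cycDist v a (a + 1)
    have := cycDist_lt v (a + 1); have := cycDist_lt v u
    rw [cycDist_self_add_one a hn] at *
    omega
  have hlt : cycDist v (a + 1) < cycDist v u := by
    have : cycDist v (a + 1) ≠ cycDist v u := fun h => hua (cycDist_inj.1 h).symm
    omega
  have hnot : ¬ ∀ j, 0 < cycDist v j → cycDist v j < cycDist v (a + 1) → F j (a + 1) :=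
    fun h' => by have := hmax (a + 1) h'; omega
  push Not at hnot
  obtain ⟨j, hj0, hj1, hj⟩ := hnot
  have ha1v : a + 1 ≠ v := fun h => by rw [h, cycDist_self] at hsucc; omega
  rcases hc v j (a + 1) u (cyc4_iff.2 ⟨hj0, hj1, hlt⟩)
      (((reflGen_iff F v _).1 (hv _)).resolve_left ha1v) with ⟨-, h'⟩ | ⟨-, h'⟩
  · exact absurd h' hj
  · exact .single h'

theorem shareEnd_of_subset (hor : ∀ i j, F i j → ¬ F j i) {u w su sw : Fin n} {ru rw : ℕ}
    (hu : {j | ReflGen F u j} = cycIcc su ru) (hw : {j | ReflGen F w j} = cycIcc sw rw)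
    (hrw : rw + 2 ≤ n) (huw : u ≠ w) (hsub : cycIcc su ru ⊆ cycIcc sw rw) :
    ru < rw ∧ (su = sw ∨ cycDist sw su + ru = rw) := by
  have hu' (j : Fin n) : ReflGen F u j ↔ cycDist su j ≤ ru := Set.ext_iff.1 hu j
  have hw' (j : Fin n) : ReflGen F w j ↔ cycDist sw j ≤ rw := Set.ext_iff.1 hw j
  have hA := cycDist_add_le_of_cycIcc_subset (by omega) hsub
  have hFwu : F w u :=
    ((reflGen_iff F w u).1 ((hw' u).2 (hsub ((hu' u).1 .refl)))).resolve_left huw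
  have hwu : ¬ cycDist su w ≤ ru := fun h =>
    hor w u hFwu (((reflGen_iff F u w).1 ((hu' w).2 h)).resolve_left huw.symm)
  have hww : cycDist sw w ≤ rw := (hw' w).1 .refl
  have huu : cycDist su u ≤ ru := (hu' u).1 .refl
  have := cycDist_add_cycDist sw su w; have := cycDist_add_cycDist sw su u
  have := cycDist_lt su w; have := cycDist_lt sw w; have := cycDist_lt sw u
  refine ⟨by omega, ?_⟩
  by_contra! hne
  have hA0 : cycDist sw su ≠ 0 := fun h => hne.1 (cycDist_eq_zero.1 h).symm
  -- Now `cycIcc su ru` lies strictly inside `cycIcc sw rw` and misses `w`. With a point `o`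
  -- outside `cycIcc sw rw` and the neighbour `b` of `cycIcc su ru` on the side away from `w`,
  -- the edge `w b` violates the four-point condition.
  obtain ⟨o, ho⟩ := exists_cycDist_eq sw (t := n - 1) (by omega)
  have hwo : ¬ F w o := fun h => by have := (hw' o).1 (.single h); omega
  rcases Nat.lt_or_gt_of_ne (show cycDist sw w ≠ cycDist sw su from fun h => by omega) with h | h
  · obtain ⟨b, hb⟩ := exists_cycDist_eq sw (t := cycDist sw su + ru + 1) (by omega)
    have := cycDist_add_cycDist sw su b; have := cycDist_lt su b
    have hbw : b ≠ w := fun h => by subst h; omega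
    have hub : ¬ F u b := fun h => by have := (hu' b).1 (.single h); omega
    rcases hc w u b o (cyc4_of_cycDist_lt (o := sw) (by omega) (by omega) (by omega))
      (((reflGen_iff F w b).1 ((hw' b).2 (by omega))).resolve_left hbw) with ⟨-, h⟩ | ⟨h, -⟩
    · exact hub h
    · exact hwo h
  · obtain ⟨b, hb⟩ := exists_cycDist_eq sw (t := cycDist sw su - 1) (by omega)
    have := cycDist_add_cycDist sw su b; have := cycDist_lt su b
    have hbw : b ≠ w := fun h => by subst h; omega
    have hub : ¬ F u b := fun h => by have := (hu' b).1 (.single h); omega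
    have hcyc : Cyc4 b u w o := cyc4_of_cycDist_lt (o := sw) (by omega) (by omega) (by omega)
    rcases hc w o b u hcyc.rotate.rotate
      (((reflGen_iff F w b).1 ((hw' b).2 (by omega))).resolve_left hbw) with ⟨h, -⟩ | ⟨-, h⟩
    · exact hwo h
    · exact hub h

theorem exists_nbhd_eq_cycIcc (i : Fin n) :
    ∃ s r, {j | ReflGen F i j} = cycIcc s r ∧ (r + 2 ≤ n ∨ r + 1 = n ∧
      ∃ c, cycDist s c + 1 = n ∧ ∀ u ≠ i, ReflGen F u c ∨ ReflGen F u s) := by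
  by_cases hfull : ∀ j, ReflGen F i j
  · obtain ⟨c, t, hct, hgap⟩ := hc.exists_gap hfull
    refine ⟨t, n - 1, ?_, Or.inr ⟨by have := i.pos; omega, c, hct, hgap⟩⟩
    ext j
    change ReflGen F i j ↔ cycDist t j ≤ n - 1
    simpa [hfull j] using Nat.le_sub_one_of_lt (cycDist_lt t j)
  · push Not at hfull
    obtain ⟨o, ho⟩ := hfull
    obtain ⟨s, r, hr, h⟩ := hc.exists_cycIcc ho
    exact ⟨s, r, h, Or.inl hr⟩

theorem exists_nestedOnlyAtEnds (hor : ∀ i j, F i j → ¬ F j i) :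
    ∃ (s : Fin n → Fin n) (r : Fin n → ℕ), (∀ i, r i < n) ∧
      (∀ i, {j | ReflGen F i j} = cycIcc (s i) (r i)) ∧ NestedOnlyAtEnds s r := by
  choose s r hN hr using hc.exists_nbhd_eq_cycIcc
  refine ⟨s, r, fun i => by rcases hr i with h | h <;> omega, hN, fun u w huw hsub => ?_⟩
  have hN' (i j : Fin n) : ReflGen F i j ↔ cycDist (s i) j ≤ r i := Set.ext_iff.1 (hN i) j
  rcases hr u with hu | ⟨hu, -⟩ <;> rcases hr w with hw | ⟨hw, c, hcn, hgap⟩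
  · obtain ⟨hlt, hend⟩ := hc.shareEnd_of_subset hor (hN u) (hN w) hw huw hsub
    exact ⟨hlt, hend.imp_right Or.inl⟩
  · refine ⟨by omega, ?_⟩
    have := shareEnd_or_gap_of_full hcn hu (by simpa only [hN'] using hgap u huw)
    exact this.imp_right (Or.imp_left (by omega))
  · have := cycDist_add_le_of_cycIcc_subset (by omega) hsub
    omega
  · have := cycDist_lt (s u) w; have := cycDist_lt (s w) u
    exact absurd (((reflGen_iff F w u).1 ((hN' w u).2 (by omega))).resolve_left huw)
      (hor u w (((reflGen_iff F u w).1 ((hN' u w).2 (by omega))).resolve_left huw.symm))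

end CyclicFourPoint

noncomputable def slack (r : ℕ) : ℝ := 1 / (r + 3)

theorem slack_pos (r : ℕ) : 0 < slack r := by unfold slack; positivity

theorem slack_lt_half (r : ℕ) : slack r < 1 / 2 := by
  unfold slack
  exact one_div_lt_one_div_of_lt (by norm_num) (by linarith [(Nat.cast_nonneg r : (0 : ℝ) ≤ r)])

theorem slack_lt_slack {r r' : ℕ} (h : r < r') : slack r' < slack r := by
  unfold slack
  exact one_div_lt_one_div_of_lt (by positivity) (by exact_mod_cast Nat.add_lt_add_right h 3)

section Model

variable {n : ℕ}

theorem exists_cast_cycDist (s j : Fin n) : ∃ K : ℤ, (cycDist s j : ℝ) = j - s + K * n := by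
  rw [cycDist_eq]
  split_ifs with h
  · exact ⟨0, by push_cast [h]; ring⟩
  · exact ⟨1, by push_cast [show s.val ≤ n + j.val by omega]; ring⟩

theorem arcMem_div_iff (s j : Fin n) (ℓ e t : ℝ) :
    arcMem ((s - e) / n) ℓ ((j + t) / n) ↔ Int.fract ((cycDist s j + t + e) / n) ≤ ℓ := by
  obtain ⟨K, hK⟩ := exists_cast_cycDist s j
  have hn : (n : ℝ) ≠ 0 := by exact_mod_cast j.pos.ne'
  unfold arcMem
  rw [show (j + t) / n - (s - e) / n = (cycDist s j + t + e) / n - K by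
    rw [hK]; field_simp; ring, Int.fract_sub_intCast]

theorem arcMem_div_iff_of_lt {s j : Fin n} {ℓ e t : ℝ} (h0 : 0 ≤ cycDist s j + t + e)
    (h1 : cycDist s j + t + e < n) :
    arcMem ((s - e) / n) (ℓ / n) ((j + t) / n) ↔ cycDist s j + t + e ≤ ℓ := by
  have hn : (0 : ℝ) < n := by exact_mod_cast j.pos
  rw [arcMem_div_iff, Int.fract_eq_self.2 ⟨div_nonneg h0 hn.le, (div_lt_one hn).2 h1⟩,
    div_le_div_iff_of_pos_right hn]

theorem arcMem_model_iff (s j : Fin n) (r : ℕ) :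
    arcMem ((s - slack r) / n) ((r + 2 * slack r) / n) (j / n) ↔ j ∈ cycIcc s r := by
  have := slack_pos r; have := slack_lt_half r
  have hd : (cycDist s j : ℝ) + 1 ≤ n := by exact_mod_cast cycDist_lt s j
  have key := arcMem_div_iff_of_lt (ℓ := r + 2 * slack r) (t := 0) (s := s) (j := j)
    (by positivity) (by linarith)
  rw [add_zero] at key
  rw [key]
  change _ ↔ cycDist s j ≤ r
  constructor
  · intro h
    by_contra! hlt
    have : (r : ℝ) + 1 ≤ cycDist s j := by exact_mod_cast hlt
    linarith
  · intro h
    have : (cycDist s j : ℝ) ≤ r := by exact_mod_cast h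
    linarith

theorem exists_arcMem_model_not_arcMem {su sw : Fin n} {ru rw : ℕ} (hrw : rw < n) (hlt : ru < rw)
    (h : su = sw ∨ cycDist sw su + ru = rw ∨
      ∃ c, cycDist su c + 1 ≤ ru ∧ cycDist sw c + 1 = n) :
    ∃ x, arcMem ((su - slack ru) / n) ((ru + 2 * slack ru) / n) x ∧
      ¬ arcMem ((sw - slack rw) / n) ((rw + 2 * slack rw) / n) x := by
  have hn : (0 : ℝ) < n := by exact_mod_cast su.pos
  have hrw' : (rw : ℝ) + 1 ≤ n := by exact_mod_cast hrw
  have hlt' : (ru : ℝ) + 1 ≤ rw := by exact_mod_cast hlt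
  have := slack_pos ru; have := slack_pos rw; have := slack_lt_half ru; have := slack_lt_half rw
  have hε := slack_lt_slack hlt
  -- The witness is the end of the arc of `u` overhanging the shared endpoint, or the middle
  -- of the gap of `w` between `c` and its successor.
  rcases h with rfl | hend | ⟨c, hcu, hcw⟩
  · refine ⟨((su : ℝ) + -slack ru) / n, ?_, ?_⟩
    · rw [arcMem_div_iff_of_lt] <;> simp only [cycDist_self, Nat.cast_zero] <;> linarith
    · rw [arcMem_div_iff, cycDist_self, Nat.cast_zero,
        (Int.fract_eq_iff (b := (slack rw - slack ru + n) / n)).2 ⟨div_nonneg (by linarith) hn.le,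
          (div_lt_one hn).2 (by linarith), -1, by field_simp; push_cast; ring⟩,
        div_le_div_iff_of_pos_right hn]
      linarith
  · have hend' : (cycDist sw su : ℝ) + ru = rw := by exact_mod_cast hend
    refine ⟨((su : ℝ) + (ru + slack ru)) / n, ?_, ?_⟩
    · rw [arcMem_div_iff_of_lt] <;> simp only [cycDist_self, Nat.cast_zero] <;> linarith
    · rw [arcMem_div_iff_of_lt] <;> linarith
  · have hcu' : (cycDist su c : ℝ) + 1 ≤ ru := by exact_mod_cast hcu
    have hcw' : (cycDist sw c : ℝ) + 1 = n := by exact_mod_cast hcw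
    have := (Nat.cast_nonneg (cycDist su c) : (0 : ℝ) ≤ _)
    refine ⟨((c : ℝ) + 1 / 2) / n, ?_, ?_⟩
    · rw [arcMem_div_iff_of_lt] <;> linarith
    · rw [arcMem_div_iff_of_lt] <;> linarith

theorem exists_arcs_of_nestedOnlyAtEnds {s : Fin n → Fin n} {r : Fin n → ℕ} (hr : ∀ i, r i < n)
    (hnest : NestedOnlyAtEnds s r) :
    ∃ a ℓ p : Fin n → ℝ, (∀ i j, arcMem (a i) (ℓ i) (p j) ↔ j ∈ cycIcc (s i) (r i)) ∧
      ∀ u w, ¬ arcSet (a u) (ℓ u) ⊂ arcSet (a w) (ℓ w) := by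
  refine ⟨fun i => (s i - slack (r i)) / n, fun i => (r i + 2 * slack (r i)) / n, fun j => j / n,
    fun i j => arcMem_model_iff _ _ _, ?_⟩
  rintro u w ⟨hsub, hnot⟩
  rcases eq_or_ne u w with rfl | huw
  · exact hnot hsub
  have hI : cycIcc (s u) (r u) ⊆ cycIcc (s w) (r w) := fun j hj =>
    (arcMem_model_iff _ _ _).1 (hsub ((arcMem_model_iff _ _ _).2 hj))
  obtain ⟨hlt, h⟩ := hnest u w huw hI
  obtain ⟨x, hxu, hxw⟩ := exists_arcMem_model_not_arcMem (hr w) hlt h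
  exact hxw (hsub hxu)

end Model

theorem isProperCACatchDigraph_of_cyclicFourPoint {V : Type*} [Fintype V] {E : V → V → Prop}
    (hirr : ∀ v, ¬ E v v) (horient : Oriented E) (σ : Fin (Fintype.card V) ≃ V)
    (hσ : CyclicFourPoint fun i j => E (σ i) (σ j)) : IsProperCACatchDigraph E := by
  obtain ⟨s, r, hr, hN, hnest⟩ := hσ.exists_nestedOnlyAtEnds fun i j => horient (σ i) (σ j)
  obtain ⟨a, ℓ, p, hmem, hproper⟩ := exists_arcs_of_nestedOnlyAtEnds hr hnest
  have hmem' (u v : V) :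
      arcMem (a (σ.symm u)) (ℓ (σ.symm u)) (p (σ.symm v)) ↔ v = u ∨ E u v := by
    rw [hmem, ← Set.ext_iff.1 (hN _), Set.mem_ofPred_eq, Relation.reflGen_iff]
    simp only [σ.symm.injective.eq_iff, Equiv.apply_symm_apply]
  refine ⟨a ∘ σ.symm, ℓ ∘ σ.symm, p ∘ σ.symm, fun v => (hmem' v v).2 (Or.inl rfl),
    fun u v => hproper _ _, fun u v => ?_⟩
  rw [Function.comp_apply, Function.comp_apply, Function.comp_apply, hmem']
  exact ⟨fun h => ⟨fun huv => hirr u (huv ▸ h), Or.inr h⟩,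
    fun ⟨huv, h⟩ => h.resolve_left (Ne.symm huv)⟩

/-- an oriented digraph is an oriented proper circular-arc catch
digraph iff there is a circular vertex ordering such that whenever u, v, w, x
occur in this cyclic order and uw is an edge, either uv and vw are edges, or
ux and xw are edges. -/
theorem stmt_16 {V : Type*} [Fintype V] (E : V → V → Prop)
    (hirr : ∀ v, ¬ E v v) (horient : Oriented E) :
    IsProperCACatchDigraph E ↔
      ∃ σ : Fin (Fintype.card V) ≃ V,
        ∀ i j k l : Fin (Fintype.card V), Cyc4 i j k l →
          E (σ i) (σ k) →
            (E (σ i) (σ j) ∧ E (σ j) (σ k)) ∨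
            (E (σ i) (σ l) ∧ E (σ l) (σ k)) :=
  ⟨exists_cyclicFourPoint_of_isProperCACatchDigraph horient,
    fun ⟨σ, hσ⟩ => isProperCACatchDigraph_of_cyclicFourPoint hirr horient σ hσ⟩
end

section
/- Let G be an oriented digraph admitting a circular vertex ordering σ such that for all u <_σ v <_σ w <_σ x, if uw ∈ E then uv ∈ E and vw ∈ E, or ux ∈ E and xw ∈ E. Then the augmented adjacency matrix of G, with rows and columns both arranged according to σ, satisfies the circular ones property along both rows and columns. -/
/-!
A set of positions on the cycle is a circular block as soon as no cyclically ordered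
quadruple alternates in, out, in, out: take a start `a` of the set (`a ∈ S`, `a - 1 ∉ S`)
and the element `b ∈ S` farthest from `a`; a gap between them would alternate with
`a`, `b`, `a - 1`.

The four-point property makes the closed out-neighbourhood `S` of `i` star-shaped from `i`:
whenever `i, a, b, c` are in cyclic order and `b ∈ S`, one of `a`, `c` lies in `S`. If
`j, k, l, m` alternated with `j, l ∈ S`, then according to the arc between `k` and `m` that
contains `i`, either `i, k, l, m` or `i, m, j, k` would be in cyclic order, and star-shapedness
would put `k` or `m` into `S`. A rotation of the quadruple gives the same for closed
in-neighbourhoods.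
-/

namespace Cyc4

variable {n : ℕ} {i j k l : Fin n}

theorem rotate_s17 (h : Cyc4 i j k l) : Cyc4 j k l i := by
  unfold Cyc4 at *; tauto

theorem ne₁₃ (h : Cyc4 i j k l) : i ≠ k := by
  unfold Cyc4 at h; rintro rfl; simp only [Fin.lt_def] at h; omega

theorem iff_val_sub :
    Cyc4 i j k l ↔ 0 < (j - i).val ∧ (j - i).val < (k - i).val ∧ (k - i).val < (l - i).val := by
  have val_sub (a : Fin n) :
      (a - i).val = a.val - i.val ∧ i ≤ a ∨ (a - i).val = n + a.val - i.val ∧ a < i :=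
    (le_or_gt i a).imp (fun h => ⟨Fin.coe_sub_iff_le.2 h, h⟩)
      (fun h => ⟨Fin.coe_sub_iff_lt.2 h, h⟩)
  have := i.isLt; have := j.isLt; have := k.isLt; have := l.isLt
  rcases val_sub j with ⟨hj, hj'⟩ | ⟨hj, hj'⟩ <;> rcases val_sub k with ⟨hk, hk'⟩ | ⟨hk, hk'⟩ <;>
    rcases val_sub l with ⟨hl, hl'⟩ | ⟨hl, hl'⟩ <;>
    simp only [Cyc4, Fin.lt_def, Fin.le_def, hj, hk, hl] at hj' hk' hl' ⊢ <;>
    omega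

theorem or_of_ne {r : Fin n} (h : Cyc4 i j k l) (hj : r ≠ j) (hl : r ≠ l) :
    Cyc4 r j k l ∨ Cyc4 r l i j := by
  simp only [Cyc4, Fin.lt_def, ne_eq, Fin.ext_iff] at h hj hl ⊢
  rcases h with h | h | h | h <;> omega

end Cyc4

open Fin.NatCast in
theorem circBlock_of_forall_cyc4 {n : ℕ} {S : Set (Fin n)} (hS : S.Nonempty)
    (halt : ∀ i j k l, Cyc4 i j k l → i ∈ S → k ∈ S → j ∈ S ∨ l ∈ S) : CircBlock S := by
  obtain ⟨i₀, hi₀⟩ := hS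
  obtain ⟨m, rfl⟩ : ∃ m, n = m + 1 := Nat.exists_eq_succ_of_ne_zero i₀.pos.ne'
  right
  by_cases hstart : ∃ a ∈ S, a - 1 ∉ S
  · obtain ⟨a, haS, ha⟩ := hstart
    obtain ⟨b, hbS, hb⟩ :=
      S.toFinite.toFinset.exists_max_image (fun x => (x - a).val) ⟨a, by simpa⟩
    simp only [Set.Finite.mem_toFinset] at hbS hb
    refine ⟨a, b, Set.ext fun x => ⟨fun hx => Fin.le_def.2 (hb x hx), fun hx => ?_⟩⟩
    by_contra hxS
    have hcyc : Cyc4 a x b (a - 1) := by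
      have hxa : 0 < (x - a).val :=
        Fin.val_pos_iff.2 (Fin.pos_iff_ne_zero.2 (sub_ne_zero.2 fun h => hxS (h ▸ haS)))
      have hxb : (x - a).val ≠ (b - a).val :=
        Fin.val_ne_of_ne fun h => hxS (sub_left_injective h ▸ hbS)
      have hba : (b - a).val ≠ (a - 1 - a).val :=
        Fin.val_ne_of_ne fun h => ha (sub_left_injective h ▸ hbS)
      have hxb' : (x - a).val ≤ (b - a).val := Fin.le_def.1 hx
      rw [sub_sub_cancel_left, Fin.coe_neg_one] at hba
      rw [Cyc4.iff_val_sub, sub_sub_cancel_left, Fin.coe_neg_one]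
      have := (b - a).is_le
      omega
    exact (halt _ _ _ _ hcyc haS hbS).elim hxS ha
  · push Not at hstart
    have hsub (k : ℕ) : i₀ - (k : Fin (m + 1)) ∈ S := by
      induction k with
      | zero => simpa using hi₀
      | succ k ih => simpa [sub_add_eq_sub_sub] using hstart _ ih
    refine ⟨0, -1, Set.ext fun x => iff_of_true (by simpa using hsub (i₀ - x).val) ?_⟩
    show x - 0 ≤ -1 - 0
    simpa only [sub_zero, Fin.le_def, Fin.coe_neg_one] using x.is_le

theorem circBlock_of_star {n : ℕ} {S : Set (Fin n)} {r : Fin n} (hr : r ∈ S)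
    (hstar : ∀ a b c, Cyc4 r a b c → b ∈ S → a ∈ S ∨ c ∈ S) : CircBlock S := by
  refine circBlock_of_forall_cyc4 ⟨r, hr⟩ fun i j k l h hi hk => ?_
  by_contra! ⟨hj, hl⟩
  rcases h.or_of_ne (r := r) (ne_of_mem_of_not_mem hr hj) (ne_of_mem_of_not_mem hr hl)
    with h' | h'
  · exact (hstar j k l h' hk).elim hj hl
  · exact (hstar l i j h' hi).elim hl hj

def FourPointProperty {n : ℕ} (R : Fin n → Fin n → Prop) : Prop :=
  ∀ i j k l, Cyc4 i j k l → R i k → (R i j ∧ R j k) ∨ (R i l ∧ R l k)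

namespace FourPointProperty

variable {n : ℕ} {R : Fin n → Fin n → Prop}

theorem circBlock_row (hR : FourPointProperty R) (i : Fin n) :
    CircBlock {j | R i j ∨ i = j} :=
  circBlock_of_star (Or.inr rfl) fun a b c h hb =>
    (hR i a b c h (hb.resolve_right h.ne₁₃)).imp (Or.inl ·.1) (Or.inl ·.1)

theorem circBlock_col (hR : FourPointProperty R) (j : Fin n) :
    CircBlock {i | R i j ∨ i = j} :=
  circBlock_of_star (Or.inr rfl) fun a b c h hb =>
    (hR b c j a h.rotate_s17.rotate_s17 (hb.resolve_right h.ne₁₃.symm)).symm.imp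
      (Or.inl ·.2) (Or.inl ·.2)

end FourPointProperty

theorem stmt_17_general {V : Type*} [Fintype V] (E : V → V → Prop)
    (σ : Fin (Fintype.card V) ≃ V)
    (h : ∀ i j k l : Fin (Fintype.card V), Cyc4 i j k l →
        E (σ i) (σ k) →
          (E (σ i) (σ j) ∧ E (σ j) (σ k)) ∨
          (E (σ i) (σ l) ∧ E (σ l) (σ k))) :
    (∀ i, CircBlock {j | E (σ i) (σ j) ∨ σ i = σ j}) ∧
    (∀ j, CircBlock {i | E (σ i) (σ j) ∨ σ i = σ j}) := by
  have hR : FourPointProperty fun i j => E (σ i) (σ j) := h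
  simp only [σ.injective.eq_iff]
  exact ⟨hR.circBlock_row, hR.circBlock_col⟩

/-- if an oriented digraph has a circular vertex ordering with the
four-point property, then its augmented adjacency matrix, with rows and columns
arranged by this ordering, has circular ones along both rows and columns. -/
theorem stmt_17 {V : Type*} [Fintype V] (E : V → V → Prop)
    (hirr : ∀ v, ¬ E v v) (horient : Oriented E)
    (σ : Fin (Fintype.card V) ≃ V)
    (h : ∀ i j k l : Fin (Fintype.card V), Cyc4 i j k l →
        E (σ i) (σ k) →
          (E (σ i) (σ j) ∧ E (σ j) (σ k)) ∨
          (E (σ i) (σ l) ∧ E (σ l) (σ k))) :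
    (∀ i, CircBlock {j | E (σ i) (σ j) ∨ σ i = σ j}) ∧
    (∀ j, CircBlock {i | E (σ i) (σ j) ∨ σ i = σ j}) :=
  stmt_17_general E σ h
end
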